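/- arXiv:2410.24053 — 2 statements merged into one kernel-verified Lean document; each statement's English description precedes it below -/
import Mathlib

section
/- For each of the rules 4L, □L, and □R of LNGL, if the conclusion is invalid (its formula interpretation fails at some world of some transitive converse-wellfounded model) then the premise is also invalid. -/
/-- Modal formulas built from propositional atoms with ¬, ∨, □. -/
inductive Fml : Type
  | atom : ℕ → Fml
  | neg : Fml → Fml
  | or : Fml → Fml → Fml
  | box : Fml → Fml
  deriving DecidableEq

/-- Implication φ → ψ abbreviates ¬φ ∨ ψ. -/
def Fml.imp (φ ψ : Fml) : Fml := .or (.neg φ) ψ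

/-- Conjunction φ ∧ ψ abbreviates ¬(¬φ ∨ ¬ψ). -/
def Fml.and (φ ψ : Fml) : Fml := .neg (.or (.neg φ) (.neg ψ))

/-- Kripke satisfaction for modal formulas. -/
def Sat {W : Type} (R : W → W → Prop) (V : ℕ → W → Prop) : W → Fml → Prop
  | w, .atom n => V n w
  | w, .neg φ => ¬ Sat R V w φ
  | w, .or φ ψ => Sat R V w φ ∨ Sat R V w ψ
  | w, .box φ => ∀ u, R w u → Sat R V u φ

/-- Validity on all models (W,R,V) with W nonempty, R transitive and
conversely well-founded (no infinite ascending R-chains). -/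
def Valid (φ : Fml) : Prop :=
  ∀ (W : Type), Nonempty W → ∀ (R : W → W → Prop) (V : ℕ → W → Prop),
    Transitive R → WellFounded (fun a b => R b a) → ∀ w : W, Sat R V w φ

def verum : Fml := .or (.atom 0) (.neg (.atom 0))

def falsum : Fml := .neg verum

/-- Conjunction of a multiset of formulas. -/
noncomputable def mconj (Γ : Multiset Fml) : Fml := Γ.toList.foldr Fml.and verum

/-- Disjunction of a multiset of formulas. -/
noncomputable def mdisj (Δ : Multiset Fml) : Fml := Δ.toList.foldr Fml.or falsum

/-- A linear nested sequent: a list of components Γ ⊢ Δ. -/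
abbrev LNS := List (Multiset Fml × Multiset Fml)

/-- Formula interpretation of a linear nested sequent:
f(Γ ⊢ Δ) = ⋀Γ → ⋁Δ and f(Γ ⊢ Δ // G') = ⋀Γ → (⋁Δ ∨ □ f(G')). -/
noncomputable def interpLNS : LNS → Fml
  | [] => verum
  | [(Γ, Δ)] => Fml.imp (mconj Γ) (mdisj Δ)
  | (Γ, Δ) :: S => Fml.imp (mconj Γ) (Fml.or (mdisj Δ) (Fml.box (interpLNS S)))

section Aux
variable {W : Type} {R : W → W → Prop} {V : ℕ → W → Prop}

lemma sat_verum (w : W) : Sat R V w verum := by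
  by_cases h : V 0 w
  · exact Or.inl h
  · exact Or.inr h

lemma sat_and {w : W} {φ ψ : Fml} :
    Sat R V w (Fml.and φ ψ) ↔ Sat R V w φ ∧ Sat R V w ψ := by
  simp only [Fml.and, Sat]; tauto

lemma sat_imp {w : W} {φ ψ : Fml} :
    Sat R V w (Fml.imp φ ψ) ↔ (Sat R V w φ → Sat R V w ψ) := by
  simp only [Fml.imp, Sat]; tauto

lemma sat_mconj {w : W} {Γ : Multiset Fml} :
    Sat R V w (mconj Γ) ↔ ∀ ψ ∈ Γ, Sat R V w ψ := by
  unfold mconj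
  rw [show (∀ ψ ∈ Γ, Sat R V w ψ) ↔ ∀ ψ ∈ Γ.toList, Sat R V w ψ by
    simp [Multiset.mem_toList]]
  induction Γ.toList with
  | nil => simp [sat_verum]
  | cons a l ih => simp [sat_and, ih]

lemma sat_mdisj {w : W} {Δ : Multiset Fml} :
    Sat R V w (mdisj Δ) ↔ ∃ ψ ∈ Δ, Sat R V w ψ := by
  unfold mdisj
  rw [show (∃ ψ ∈ Δ, Sat R V w ψ) ↔ ∃ ψ ∈ Δ.toList, Sat R V w ψ by
    simp [Multiset.mem_toList]]
  induction Δ.toList with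
  | nil =>
    simp only [List.foldr_nil]
    constructor
    · intro h; exact absurd (sat_verum w) h
    · rintro ⟨ψ, h, _⟩; simp at h
  | cons a l ih =>
    simp only [List.foldr_cons, Sat, ih, List.mem_cons]
    constructor
    · rintro (h | ⟨ψ, hm, hs⟩)
      · exact ⟨a, Or.inl rfl, h⟩
      · exact ⟨ψ, Or.inr hm, hs⟩
    · rintro ⟨ψ, (rfl | hm), hs⟩
      · exact Or.inl hs
      · exact Or.inr ⟨ψ, hm, hs⟩

lemma interp_cons (p : Multiset Fml × Multiset Fml) (l : LNS) (hl : l ≠ []) :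
    interpLNS (p :: l) =
      Fml.imp (mconj p.1) (Fml.or (mdisj p.2) (Fml.box (interpLNS l))) := by
  obtain ⟨Γ, Δ⟩ := p
  cases l with
  | nil => exact absurd rfl hl
  | cons q t => obtain ⟨a, b⟩ := q; rfl

lemma mono {S1 S2 : LNS} (h1 : S1 ≠ []) (h2 : S2 ≠ [])
    (h : ∀ w, Sat R V w (interpLNS S1) → Sat R V w (interpLNS S2)) :
    ∀ (G : LNS) (w : W), Sat R V w (interpLNS (G ++ S1)) →
      Sat R V w (interpLNS (G ++ S2)) := by
  intro G
  induction G with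
  | nil => exact h
  | cons p G ih =>
    intro w hw
    have e1 : (G ++ S1) ≠ [] := by simp [h1]
    have e2 : (G ++ S2) ≠ [] := by simp [h2]
    rw [List.cons_append, interp_cons p _ e1] at hw
    rw [List.cons_append, interp_cons p _ e2]
    rw [sat_imp] at hw ⊢
    intro hΓ
    rcases hw hΓ with hd | hb
    · exact Or.inl hd
    · exact Or.inr (fun u hu => ih u (hb u hu))

end Aux
section Rules
variable {W : Type} {R : W → W → Prop} {V : ℕ → W → Prop}

lemma interp_two (Γ Δ Ξ Ω : Multiset Fml) :
    interpLNS [(Γ, Δ), (Ξ, Ω)] =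
      Fml.imp (mconj Γ) (Fml.or (mdisj Δ)
        (Fml.box (Fml.imp (mconj Ξ) (mdisj Ω)))) := rfl

lemma tail_4L (hT : Transitive R) (Γ Δ Ξ Ω : Multiset Fml) (φ : Fml) (w : W)
    (h : Sat R V w (interpLNS [(Fml.box φ ::ₘ Γ, Δ), (Fml.box φ ::ₘ Ξ, Ω)])) :
    Sat R V w (interpLNS [(Fml.box φ ::ₘ Γ, Δ), (Ξ, Ω)]) := by
  rw [interp_two, sat_imp] at h ⊢
  intro hΓ
  have hbox : Sat R V w (Fml.box φ) :=
    (sat_mconj.1 hΓ) _ (Multiset.mem_cons_self _ _)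
  rcases h hΓ with hd | hb
  · exact Or.inl hd
  · refine Or.inr (fun u hu => ?_)
    have hbu := hb u hu
    rw [sat_imp] at hbu ⊢
    intro hΞ
    refine hbu (sat_mconj.2 ?_)
    intro ψ hψ
    rcases Multiset.mem_cons.1 hψ with rfl | hm
    · exact fun v hv => hbox v (hT hu hv)
    · exact sat_mconj.1 hΞ ψ hm

lemma tail_boxL (Γ Δ Ξ Ω : Multiset Fml) (φ : Fml) (w : W)
    (h : Sat R V w (interpLNS [(Fml.box φ ::ₘ Γ, Δ), (φ ::ₘ Ξ, Ω)])) :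
    Sat R V w (interpLNS [(Fml.box φ ::ₘ Γ, Δ), (Ξ, Ω)]) := by
  rw [interp_two, sat_imp] at h ⊢
  intro hΓ
  have hbox : Sat R V w (Fml.box φ) :=
    (sat_mconj.1 hΓ) _ (Multiset.mem_cons_self _ _)
  rcases h hΓ with hd | hb
  · exact Or.inl hd
  · refine Or.inr (fun u hu => ?_)
    have hbu := hb u hu
    rw [sat_imp] at hbu ⊢
    intro hΞ
    refine hbu (sat_mconj.2 ?_)
    intro ψ hψ
    rcases Multiset.mem_cons.1 hψ with rfl | hm
    · exact hbox u hu
    · exact sat_mconj.1 hΞ ψ hm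

lemma tail_boxR (hT : Transitive R) (hW : WellFounded (fun a b : W => R b a))
    (Γ Δ : Multiset Fml) (φ : Fml) (w : W)
    (h : Sat R V w (interpLNS [(Γ, Δ), (({Fml.box φ} : Multiset Fml), ({φ} : Multiset Fml))])) :
    Sat R V w (interpLNS [(Γ, Fml.box φ ::ₘ Δ)]) := by
  rw [interp_two, sat_imp] at h
  show Sat R V w (Fml.imp (mconj Γ) (mdisj (Fml.box φ ::ₘ Δ)))
  rw [sat_imp]
  intro hΓ
  rcases h hΓ with hd | hb
  · obtain ⟨ψ, hm, hs⟩ := sat_mdisj.1 hd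
    exact sat_mdisj.2 ⟨ψ, Multiset.mem_cons_of_mem hm, hs⟩
  · -- Löb: from ∀u, Rwu → (□φ at u → φ at u), derive □φ at w
    have key : ∀ u, R w u → Sat R V u φ := by
      intro u hu
      induction u using WellFounded.induction hW with
      | _ u ih =>
        have h1 := hb u hu
        rw [sat_imp] at h1
        have h2 : Sat R V u (mconj ({Fml.box φ} : Multiset Fml)) := by
          rw [sat_mconj]
          intro ψ hψ
          rw [Multiset.mem_singleton] at hψ
          subst hψ
          exact fun v hv => ih v hv (hT hu hv)
        obtain ⟨ψ, hm, hs⟩ := sat_mdisj.1 (h1 h2)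
        rw [Multiset.mem_singleton] at hm
        exact hm ▸ hs
    exact sat_mdisj.2 ⟨Fml.box φ, Multiset.mem_cons_self _ _, key⟩

end Rules


/-- For each of the rules 4L, □L and □R of LNGL: if the conclusion is
invalid, then the premise is invalid. -/
theorem lngl_rules_preserve_invalidity (G : LNS) (Γ Δ Ξ Ω : Multiset Fml)
    (φ : Fml) :
    (¬ Valid (interpLNS (G ++ [(Fml.box φ ::ₘ Γ, Δ), (Ξ, Ω)])) →
      ¬ Valid (interpLNS (G ++ [(Fml.box φ ::ₘ Γ, Δ), (Fml.box φ ::ₘ Ξ, Ω)]))) ∧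
    (¬ Valid (interpLNS (G ++ [(Fml.box φ ::ₘ Γ, Δ), (Ξ, Ω)])) →
      ¬ Valid (interpLNS (G ++ [(Fml.box φ ::ₘ Γ, Δ), (φ ::ₘ Ξ, Ω)]))) ∧
    (¬ Valid (interpLNS (G ++ [(Γ, Fml.box φ ::ₘ Δ)])) →
      ¬ Valid (interpLNS (G ++ [(Γ, Δ), ({Fml.box φ}, {φ})]))) := by
  refine ⟨?_, ?_, ?_⟩ <;>
    (intro hc hp; apply hc;
     intro W hne R V hT hWF w)
  · exact mono (by simp) (by simp) (tail_4L hT Γ Δ Ξ Ω φ) G w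
      (hp W hne R V hT hWF w)
  · exact mono (by simp) (by simp) (tail_boxL Γ Δ Ξ Ω φ) G w
      (hp W hne R V hT hWF w)
  · exact mono (by simp) (by simp) (tail_boxR hT hWF Γ Δ φ) G w
      (hp W hne R V hT hWF w)
end

section
/- In LNGL, the ∨L rule is height-preserving invertible: if G // Γ, φ∨ψ ⊢ Δ has a proof of height h, then both G // Γ, φ ⊢ Δ and G // Γ, ψ ⊢ Δ have proofs of height at most h. -/
/-- The linear nested sequent calculus LNGL, indexed by height:
`LNGL n S` means S has an LNGL proof of height at most n. -/
inductive LNGL : ℕ → LNS → Prop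
  | id1 (n : ℕ) (G : LNS) (Γ Δ : Multiset Fml) (p : ℕ) :
      LNGL n (G ++ [(Fml.atom p ::ₘ Γ, Fml.atom p ::ₘ Δ)])
  | id2 (n : ℕ) (G : LNS) (Γ Δ : Multiset Fml) (φ : Fml) :
      LNGL n (G ++ [(Fml.box φ ::ₘ Γ, Fml.box φ ::ₘ Δ)])
  | negL {n : ℕ} {G : LNS} {Γ Δ : Multiset Fml} {φ : Fml} :
      LNGL n (G ++ [(Γ, φ ::ₘ Δ)]) → LNGL (n + 1) (G ++ [(Fml.neg φ ::ₘ Γ, Δ)])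
  | negR {n : ℕ} {G : LNS} {Γ Δ : Multiset Fml} {φ : Fml} :
      LNGL n (G ++ [(φ ::ₘ Γ, Δ)]) → LNGL (n + 1) (G ++ [(Γ, Fml.neg φ ::ₘ Δ)])
  | orL {n : ℕ} {G : LNS} {Γ Δ : Multiset Fml} {φ ψ : Fml} :
      LNGL n (G ++ [(φ ::ₘ Γ, Δ)]) → LNGL n (G ++ [(ψ ::ₘ Γ, Δ)]) →
      LNGL (n + 1) (G ++ [(Fml.or φ ψ ::ₘ Γ, Δ)])
  | orR {n : ℕ} {G : LNS} {Γ Δ : Multiset Fml} {φ ψ : Fml} :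
      LNGL n (G ++ [(Γ, φ ::ₘ ψ ::ₘ Δ)]) → LNGL (n + 1) (G ++ [(Γ, Fml.or φ ψ ::ₘ Δ)])
  | fourL {n : ℕ} {G : LNS} {Γ Δ Ξ Ω : Multiset Fml} {φ : Fml} :
      LNGL n (G ++ [(Fml.box φ ::ₘ Γ, Δ), (Fml.box φ ::ₘ Ξ, Ω)]) →
      LNGL (n + 1) (G ++ [(Fml.box φ ::ₘ Γ, Δ), (Ξ, Ω)])
  | boxL {n : ℕ} {G : LNS} {Γ Δ Ξ Ω : Multiset Fml} {φ : Fml} :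
      LNGL n (G ++ [(Fml.box φ ::ₘ Γ, Δ), (φ ::ₘ Ξ, Ω)]) →
      LNGL (n + 1) (G ++ [(Fml.box φ ::ₘ Γ, Δ), (Ξ, Ω)])
  | boxR {n : ℕ} {G : LNS} {Γ Δ : Multiset Fml} {φ : Fml} :
      LNGL n (G ++ [(Γ, Δ), ({Fml.box φ}, {φ})]) →
      LNGL (n + 1) (G ++ [(Γ, Fml.box φ ::ₘ Δ)])

/-- Provability in LNGL (at some height). -/
def LNGLProv (S : LNS) : Prop := ∃ n, LNGL n S


/-- Height monotonicity. -/
lemma LNGL.mono : ∀ {n : ℕ} {S : LNS}, LNGL n S → ∀ {m : ℕ}, n ≤ m → LNGL m S := by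
  intro n S h
  induction h with
  | id1 n G Γ Δ p => intro m _; exact LNGL.id1 m G Γ Δ p
  | id2 n G Γ Δ φ => intro m _; exact LNGL.id2 m G Γ Δ φ
  | negL _ ih => intro m hm
                 obtain ⟨m', rfl⟩ : ∃ m', m = m' + 1 := ⟨m - 1, by omega⟩
                 exact LNGL.negL (ih (by omega))
  | negR _ ih => intro m hm
                 obtain ⟨m', rfl⟩ : ∃ m', m = m' + 1 := ⟨m - 1, by omega⟩
                 exact LNGL.negR (ih (by omega))
  | orL _ _ ih1 ih2 => intro m hm
                       obtain ⟨m', rfl⟩ : ∃ m', m = m' + 1 := ⟨m - 1, by omega⟩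
                       exact LNGL.orL (ih1 (by omega)) (ih2 (by omega))
  | orR _ ih => intro m hm
                obtain ⟨m', rfl⟩ : ∃ m', m = m' + 1 := ⟨m - 1, by omega⟩
                exact LNGL.orR (ih (by omega))
  | fourL _ ih => intro m hm
                  obtain ⟨m', rfl⟩ : ∃ m', m = m' + 1 := ⟨m - 1, by omega⟩
                  exact LNGL.fourL (ih (by omega))
  | boxL _ ih => intro m hm
                 obtain ⟨m', rfl⟩ : ∃ m', m = m' + 1 := ⟨m - 1, by omega⟩
                 exact LNGL.boxL (ih (by omega))
  | boxR _ ih => intro m hm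
                 obtain ⟨m', rfl⟩ : ∃ m', m = m' + 1 := ⟨m - 1, by omega⟩
                 exact LNGL.boxR (ih (by omega))

lemma split1 {α : Type _} {G' G : List α} {c x : α} {H : List α}
    (h : G' ++ [c] = G ++ x :: H) :
    (G' = G ∧ c = x ∧ H = []) ∨ ∃ H', H = H' ++ [c] ∧ G' = G ++ x :: H' := by
  rcases List.eq_nil_or_concat H with rfl | ⟨H', c', rfl⟩
  · obtain ⟨h1, h2⟩ := List.append_inj' h rfl
    exact Or.inl ⟨h1, by simpa using h2, rfl⟩
  · right
    have h' : G' ++ [c] = (G ++ x :: H') ++ [c'] := by simpa using h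
    obtain ⟨h1, h2⟩ := List.append_inj' h' rfl
    simp only [List.cons.injEq] at h2
    exact ⟨H', by rw [h2.1]; simp, h1⟩

lemma split2 {α : Type _} {G' G : List α} {c1 c2 x : α} {H : List α}
    (h : G' ++ [c1, c2] = G ++ x :: H) :
    (G = G' ++ [c1] ∧ x = c2 ∧ H = []) ∨ (G' = G ∧ c1 = x ∧ H = [c2]) ∨
      ∃ H', H = H' ++ [c1, c2] ∧ G' = G ++ x :: H' := by
  have h' : (G' ++ [c1]) ++ [c2] = G ++ x :: H := by simpa using h
  rcases split1 h' with ⟨h1, h2, h3⟩ | ⟨H'', rfl, hG⟩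
  · exact Or.inl ⟨h1.symm, h2.symm, h3⟩
  · rcases split1 hG with ⟨rfl, rfl, rfl⟩ | ⟨H₃, rfl, rfl⟩
    · exact Or.inr (Or.inl ⟨rfl, rfl, rfl⟩)
    · exact Or.inr (Or.inr ⟨H₃, by simp, rfl⟩)

lemma cons_or {a : Fml} {s Γ : Multiset Fml} {φ ψ : Fml} (hne : a ≠ Fml.or φ ψ)
    (h : a ::ₘ s = Fml.or φ ψ ::ₘ Γ) :
    ∃ u, s = Fml.or φ ψ ::ₘ u ∧ Γ = a ::ₘ u := by
  rcases Multiset.cons_eq_cons.1 h with ⟨h1, _⟩ | ⟨_, u, h1, h2⟩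
  · exact absurd h1 hne
  · exact ⟨u, h1, h2⟩

lemma lngl_key : ∀ {n : ℕ} {S : LNS}, LNGL n S →
    ∀ (G : LNS) (Γ Δ : Multiset Fml) (φ ψ : Fml) (H : LNS),
      S = G ++ (Fml.or φ ψ ::ₘ Γ, Δ) :: H →
      LNGL n (G ++ (φ ::ₘ Γ, Δ) :: H) ∧ LNGL n (G ++ (ψ ::ₘ Γ, Δ) :: H) := by
  intro n S h
  induction h with
  | id1 m G' Γ' Δ' p =>
    intro G Γ Δ φ ψ H hEq
    rcases split1 hEq with ⟨hg, hc, rfl⟩ | ⟨H', rfl, rfl⟩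
    · subst hg
      injection hc with hl hr
      subst hr
      obtain ⟨u, rfl, rfl⟩ := cons_or (by simp) hl
      constructor
      · rw [Multiset.cons_swap]; exact LNGL.id1 m G' (φ ::ₘ u) Δ' p
      · rw [Multiset.cons_swap]; exact LNGL.id1 m G' (ψ ::ₘ u) Δ' p
    · exact ⟨by simpa using LNGL.id1 m (G ++ (φ ::ₘ Γ, Δ) :: H') Γ' Δ' p,
             by simpa using LNGL.id1 m (G ++ (ψ ::ₘ Γ, Δ) :: H') Γ' Δ' p⟩
  | id2 m G' Γ' Δ' χ =>
    intro G Γ Δ φ ψ H hEq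
    rcases split1 hEq with ⟨hg, hc, rfl⟩ | ⟨H', rfl, rfl⟩
    · subst hg
      injection hc with hl hr
      subst hr
      obtain ⟨u, rfl, rfl⟩ := cons_or (by simp) hl
      constructor
      · rw [Multiset.cons_swap]; exact LNGL.id2 m G' (φ ::ₘ u) Δ' χ
      · rw [Multiset.cons_swap]; exact LNGL.id2 m G' (ψ ::ₘ u) Δ' χ
    · exact ⟨by simpa using LNGL.id2 m (G ++ (φ ::ₘ Γ, Δ) :: H') Γ' Δ' χ,
             by simpa using LNGL.id2 m (G ++ (ψ ::ₘ Γ, Δ) :: H') Γ' Δ' χ⟩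
  | @negL n G' Γ' Δ' χ hpre ih =>
    intro G Γ Δ φ ψ H hEq
    rcases split1 hEq with ⟨hg, hc, rfl⟩ | ⟨H', rfl, rfl⟩
    · subst hg
      injection hc with hl hr
      subst hr
      obtain ⟨u, rfl, rfl⟩ := cons_or (by simp) hl
      obtain ⟨a1, a2⟩ := ih G' u (χ ::ₘ Δ') φ ψ [] rfl
      constructor
      · rw [Multiset.cons_swap]; exact LNGL.negL a1
      · rw [Multiset.cons_swap]; exact LNGL.negL a2
    · obtain ⟨a1, a2⟩ := ih G Γ Δ φ ψ (H' ++ [(Γ', χ ::ₘ Δ')]) (by simp)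
      constructor
      · have a1' : LNGL n ((G ++ (φ ::ₘ Γ, Δ) :: H') ++ [(Γ', χ ::ₘ Δ')]) := by
          simpa using a1
        simpa using LNGL.negL a1'
      · have a2' : LNGL n ((G ++ (ψ ::ₘ Γ, Δ) :: H') ++ [(Γ', χ ::ₘ Δ')]) := by
          simpa using a2
        simpa using LNGL.negL a2'
  | @negR n G' Γ' Δ' χ hpre ih =>
    intro G Γ Δ φ ψ H hEq
    rcases split1 hEq with ⟨hg, hc, rfl⟩ | ⟨H', rfl, rfl⟩
    · subst hg
      injection hc with hl hr
      subst hl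
      subst hr
      obtain ⟨a1, a2⟩ := ih G' (χ ::ₘ Γ) Δ' φ ψ [] (by rw [Multiset.cons_swap])
      constructor
      · have a1' : LNGL n (G' ++ [(χ ::ₘ φ ::ₘ Γ, Δ')]) := by
          rw [Multiset.cons_swap]; exact a1
        exact LNGL.negR a1'
      · have a2' : LNGL n (G' ++ [(χ ::ₘ ψ ::ₘ Γ, Δ')]) := by
          rw [Multiset.cons_swap]; exact a2
        exact LNGL.negR a2'
    · obtain ⟨a1, a2⟩ := ih G Γ Δ φ ψ (H' ++ [(χ ::ₘ Γ', Δ')]) (by simp)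
      constructor
      · have a1' : LNGL n ((G ++ (φ ::ₘ Γ, Δ) :: H') ++ [(χ ::ₘ Γ', Δ')]) := by
          simpa using a1
        simpa using LNGL.negR a1'
      · have a2' : LNGL n ((G ++ (ψ ::ₘ Γ, Δ) :: H') ++ [(χ ::ₘ Γ', Δ')]) := by
          simpa using a2
        simpa using LNGL.negR a2'
  | @orL n G' Γ' Δ' χ₁ χ₂ hpre1 hpre2 ih1 ih2 =>
    intro G Γ Δ φ ψ H hEq
    rcases split1 hEq with ⟨hg, hc, rfl⟩ | ⟨H', rfl, rfl⟩
    · subst hg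
      injection hc with hl hr
      subst hr
      rcases Multiset.cons_eq_cons.1 hl with ⟨he, rfl⟩ | ⟨hne, u, rfl, rfl⟩
      · injection he with e1 e2
        subst e1; subst e2
        exact ⟨hpre1.mono (by omega), hpre2.mono (by omega)⟩
      · obtain ⟨a1, a2⟩ := ih1 G' (χ₁ ::ₘ u) Δ' φ ψ [] (by rw [Multiset.cons_swap])
        obtain ⟨b1, b2⟩ := ih2 G' (χ₂ ::ₘ u) Δ' φ ψ [] (by rw [Multiset.cons_swap])
        constructor
        · have a1' : LNGL n (G' ++ [(χ₁ ::ₘ φ ::ₘ u, Δ')]) := by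
            rw [Multiset.cons_swap]; exact a1
          have b1' : LNGL n (G' ++ [(χ₂ ::ₘ φ ::ₘ u, Δ')]) := by
            rw [Multiset.cons_swap]; exact b1
          rw [Multiset.cons_swap]; exact LNGL.orL a1' b1'
        · have a2' : LNGL n (G' ++ [(χ₁ ::ₘ ψ ::ₘ u, Δ')]) := by
            rw [Multiset.cons_swap]; exact a2
          have b2' : LNGL n (G' ++ [(χ₂ ::ₘ ψ ::ₘ u, Δ')]) := by
            rw [Multiset.cons_swap]; exact b2
          rw [Multiset.cons_swap]; exact LNGL.orL a2' b2'
    · obtain ⟨a1, a2⟩ := ih1 G Γ Δ φ ψ (H' ++ [(χ₁ ::ₘ Γ', Δ')]) (by simp)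
      obtain ⟨b1, b2⟩ := ih2 G Γ Δ φ ψ (H' ++ [(χ₂ ::ₘ Γ', Δ')]) (by simp)
      constructor
      · have a1' : LNGL n ((G ++ (φ ::ₘ Γ, Δ) :: H') ++ [(χ₁ ::ₘ Γ', Δ')]) := by
          simpa using a1
        have b1' : LNGL n ((G ++ (φ ::ₘ Γ, Δ) :: H') ++ [(χ₂ ::ₘ Γ', Δ')]) := by
          simpa using b1
        simpa using LNGL.orL a1' b1'
      · have a2' : LNGL n ((G ++ (ψ ::ₘ Γ, Δ) :: H') ++ [(χ₁ ::ₘ Γ', Δ')]) := by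
          simpa using a2
        have b2' : LNGL n ((G ++ (ψ ::ₘ Γ, Δ) :: H') ++ [(χ₂ ::ₘ Γ', Δ')]) := by
          simpa using b2
        simpa using LNGL.orL a2' b2'
  | @orR n G' Γ' Δ' χ₁ χ₂ hpre ih =>
    intro G Γ Δ φ ψ H hEq
    rcases split1 hEq with ⟨hg, hc, rfl⟩ | ⟨H', rfl, rfl⟩
    · subst hg
      injection hc with hl hr
      subst hl; subst hr
      obtain ⟨a1, a2⟩ := ih G' Γ (χ₁ ::ₘ χ₂ ::ₘ Δ') φ ψ [] rfl
      exact ⟨LNGL.orR a1, LNGL.orR a2⟩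
    · obtain ⟨a1, a2⟩ := ih G Γ Δ φ ψ (H' ++ [(Γ', χ₁ ::ₘ χ₂ ::ₘ Δ')]) (by simp)
      constructor
      · have a1' : LNGL n ((G ++ (φ ::ₘ Γ, Δ) :: H') ++ [(Γ', χ₁ ::ₘ χ₂ ::ₘ Δ')]) := by
          simpa using a1
        simpa using LNGL.orR a1'
      · have a2' : LNGL n ((G ++ (ψ ::ₘ Γ, Δ) :: H') ++ [(Γ', χ₁ ::ₘ χ₂ ::ₘ Δ')]) := by
          simpa using a2
        simpa using LNGL.orR a2'
  | @fourL n G' Γ' Δ' Ξ Ω χ hpre ih =>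
    intro G Γ Δ φ ψ H hEq
    rcases split2 hEq with ⟨hg, hc, rfl⟩ | ⟨hg, hc, rfl⟩ | ⟨H', rfl, rfl⟩
    · subst hg
      injection hc.symm with hl hr
      subst hl; subst hr
      obtain ⟨a1, a2⟩ := ih (G' ++ [(Fml.box χ ::ₘ Γ', Δ')]) (Fml.box χ ::ₘ Γ) Ω φ ψ []
        (by rw [Multiset.cons_swap]; simp)
      constructor
      · have a1' : LNGL n (G' ++ [(Fml.box χ ::ₘ Γ', Δ'), (Fml.box χ ::ₘ φ ::ₘ Γ, Ω)]) := by
          rw [Multiset.cons_swap]; simpa using a1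
        simpa using LNGL.fourL a1'
      · have a2' : LNGL n (G' ++ [(Fml.box χ ::ₘ Γ', Δ'), (Fml.box χ ::ₘ ψ ::ₘ Γ, Ω)]) := by
          rw [Multiset.cons_swap]; simpa using a2
        simpa using LNGL.fourL a2'
    · subst hg
      injection hc with hl hr
      subst hr
      obtain ⟨u, rfl, rfl⟩ := cons_or (by simp) hl
      obtain ⟨a1, a2⟩ := ih G' (Fml.box χ ::ₘ u) Δ' φ ψ [(Fml.box χ ::ₘ Ξ, Ω)]
        (by rw [Multiset.cons_swap])
      constructor
      · have a1' : LNGL n (G' ++ [(Fml.box χ ::ₘ φ ::ₘ u, Δ'), (Fml.box χ ::ₘ Ξ, Ω)]) := by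
          rw [Multiset.cons_swap]; exact a1
        rw [Multiset.cons_swap]; exact LNGL.fourL a1'
      · have a2' : LNGL n (G' ++ [(Fml.box χ ::ₘ ψ ::ₘ u, Δ'), (Fml.box χ ::ₘ Ξ, Ω)]) := by
          rw [Multiset.cons_swap]; exact a2
        rw [Multiset.cons_swap]; exact LNGL.fourL a2'
    · obtain ⟨a1, a2⟩ := ih G Γ Δ φ ψ
        (H' ++ [(Fml.box χ ::ₘ Γ', Δ'), (Fml.box χ ::ₘ Ξ, Ω)]) (by simp)
      constructor
      · have a1' : LNGL n ((G ++ (φ ::ₘ Γ, Δ) :: H')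
            ++ [(Fml.box χ ::ₘ Γ', Δ'), (Fml.box χ ::ₘ Ξ, Ω)]) := by simpa using a1
        simpa using LNGL.fourL a1'
      · have a2' : LNGL n ((G ++ (ψ ::ₘ Γ, Δ) :: H')
            ++ [(Fml.box χ ::ₘ Γ', Δ'), (Fml.box χ ::ₘ Ξ, Ω)]) := by simpa using a2
        simpa using LNGL.fourL a2'
  | @boxL n G' Γ' Δ' Ξ Ω χ hpre ih =>
    intro G Γ Δ φ ψ H hEq
    rcases split2 hEq with ⟨hg, hc, rfl⟩ | ⟨hg, hc, rfl⟩ | ⟨H', rfl, rfl⟩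
    · subst hg
      injection hc.symm with hl hr
      subst hl; subst hr
      obtain ⟨a1, a2⟩ := ih (G' ++ [(Fml.box χ ::ₘ Γ', Δ')]) (χ ::ₘ Γ) Ω φ ψ []
        (by rw [Multiset.cons_swap]; simp)
      constructor
      · have a1' : LNGL n (G' ++ [(Fml.box χ ::ₘ Γ', Δ'), (χ ::ₘ φ ::ₘ Γ, Ω)]) := by
          rw [Multiset.cons_swap]; simpa using a1
        simpa using LNGL.boxL a1'
      · have a2' : LNGL n (G' ++ [(Fml.box χ ::ₘ Γ', Δ'), (χ ::ₘ ψ ::ₘ Γ, Ω)]) := by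
          rw [Multiset.cons_swap]; simpa using a2
        simpa using LNGL.boxL a2'
    · subst hg
      injection hc with hl hr
      subst hr
      obtain ⟨u, rfl, rfl⟩ := cons_or (by simp) hl
      obtain ⟨a1, a2⟩ := ih G' (Fml.box χ ::ₘ u) Δ' φ ψ [(χ ::ₘ Ξ, Ω)]
        (by rw [Multiset.cons_swap])
      constructor
      · have a1' : LNGL n (G' ++ [(Fml.box χ ::ₘ φ ::ₘ u, Δ'), (χ ::ₘ Ξ, Ω)]) := by
          rw [Multiset.cons_swap]; exact a1
        rw [Multiset.cons_swap]; exact LNGL.boxL a1'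
      · have a2' : LNGL n (G' ++ [(Fml.box χ ::ₘ ψ ::ₘ u, Δ'), (χ ::ₘ Ξ, Ω)]) := by
          rw [Multiset.cons_swap]; exact a2
        rw [Multiset.cons_swap]; exact LNGL.boxL a2'
    · obtain ⟨a1, a2⟩ := ih G Γ Δ φ ψ
        (H' ++ [(Fml.box χ ::ₘ Γ', Δ'), (χ ::ₘ Ξ, Ω)]) (by simp)
      constructor
      · have a1' : LNGL n ((G ++ (φ ::ₘ Γ, Δ) :: H')
            ++ [(Fml.box χ ::ₘ Γ', Δ'), (χ ::ₘ Ξ, Ω)]) := by simpa using a1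
        simpa using LNGL.boxL a1'
      · have a2' : LNGL n ((G ++ (ψ ::ₘ Γ, Δ) :: H')
            ++ [(Fml.box χ ::ₘ Γ', Δ'), (χ ::ₘ Ξ, Ω)]) := by simpa using a2
        simpa using LNGL.boxL a2'
  | @boxR n G' Γ' Δ' χ hpre ih =>
    intro G Γ Δ φ ψ H hEq
    rcases split1 hEq with ⟨hg, hc, rfl⟩ | ⟨H', rfl, rfl⟩
    · subst hg
      injection hc with hl hr
      subst hl; subst hr
      obtain ⟨a1, a2⟩ := ih G' Γ Δ' φ ψ [({Fml.box χ}, {χ})] rfl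
      exact ⟨LNGL.boxR a1, LNGL.boxR a2⟩
    · obtain ⟨a1, a2⟩ := ih G Γ Δ φ ψ
        (H' ++ [(Γ', Δ'), ({Fml.box χ}, {χ})]) (by simp)
      constructor
      · have a1' : LNGL n ((G ++ (φ ::ₘ Γ, Δ) :: H')
            ++ [(Γ', Δ'), ({Fml.box χ}, {χ})]) := by simpa using a1
        simpa using LNGL.boxR a1'
      · have a2' : LNGL n ((G ++ (ψ ::ₘ Γ, Δ) :: H')
            ++ [(Γ', Δ'), ({Fml.box χ}, {χ})]) := by simpa using a2
        simpa using LNGL.boxR a2'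

/-- The ∨L rule is height-preserving invertible in LNGL. -/
theorem lngl_orL_hp_invertible (h : ℕ) (G : LNS) (Γ Δ : Multiset Fml)
    (φ ψ : Fml) (hp : LNGL h (G ++ [(Fml.or φ ψ ::ₘ Γ, Δ)])) :
    LNGL h (G ++ [(φ ::ₘ Γ, Δ)]) ∧ LNGL h (G ++ [(ψ ::ₘ Γ, Δ)]) := by
  exact lngl_key hp G Γ Δ φ ψ [] rfl
end
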